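/- arXiv:2107.03542 — 2 statements merged into one kernel-verified Lean document; each statement's English description precedes it below -/
import Mathlib

section
/- Let m, r be positive integers and let x, y ∈ ℝ^{mr} both be sorted in decreasing order with x majorized by y. Define X_k = ∑_{j=1}^{r} x_{(k-1)r+j} and Y_k = ∑_{j=1}^{r} y_{(k-1)r+j} for 1 ≤ k ≤ m. Then X is majorized by Y. -/
open Finset

/-- The index `(k-1)·r + j` (0-indexed: `k·r + j`) inside `Fin (m * r)`. -/
def blockIdx {m r : ℕ} (k : Fin m) (j : Fin r) : Fin (m * r) :=
  ⟨k.val * r + j.val, by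
    calc k.val * r + j.val < k.val * r + r := Nat.add_lt_add_left j.isLt _
      _ = (k.val + 1) * r := by ring
      _ ≤ m * r := Nat.mul_le_mul_right _ k.isLt⟩

/-- The sum of the `k` largest entries of `v` (the maximum of `∑ i in s, v i`
over subsets `s` of cardinality `k`), via `sSup`. -/
noncomputable def kMaxSum {n : ℕ} (v : Fin n → ℝ) (k : ℕ) : ℝ :=
  sSup {t : ℝ | ∃ s : Finset (Fin n), s.card = k ∧ t = ∑ i ∈ s, v i}

/-- `x` is majorized by `y`: for every `1 ≤ k ≤ n` the sum of the `k` largest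
entries of `x` is at most that of `y`, and the total sums agree. -/
def Majorizes {n : ℕ} (x y : Fin n → ℝ) : Prop :=
  (∀ k : ℕ, 1 ≤ k → k ≤ n → kMaxSum x k ≤ kMaxSum y k) ∧ (∑ i, x i = ∑ i, y i)

/-!
For a decreasing vector the sum of its `k` largest entries is its `k`-th prefix sum. The block
sums of a decreasing vector decrease again, and their `k`-th prefix sum is the `(k r)`-th prefix
sum of the vector; so each majorization inequality for the block sums is one of those for `x ≺ y`.
-/

lemma Fin.val_le_of_strictMono {k n : ℕ} {f : Fin k → Fin n} (hf : StrictMono f) (i : Fin k) :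
    (i : ℕ) ≤ f i :=
  calc (i : ℕ) = #(Iio i) := (Fin.card_Iio i).symm
    _ = #((Iio i).image f) := (card_image_of_injective _ hf.injective).symm
    _ ≤ #(Iio (f i)) := card_le_card fun _ ↦ by
        simp only [mem_image, mem_Iio]
        rintro ⟨j, hj, rfl⟩
        exact hf hj
    _ = f i := Fin.card_Iio (f i)

lemma kMaxSum_eq_sum_castLE {n : ℕ} {v : Fin n → ℝ} (hv : Antitone v) {k : ℕ} (hk : k ≤ n) :
    kMaxSum v k = ∑ i : Fin k, v (Fin.castLE hk i) := by
  refine IsGreatest.csSup_eq ⟨⟨univ.map (Fin.castLEEmb hk), by simp, by simp⟩, ?_⟩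
  rintro t ⟨s, hs, rfl⟩
  rw [← map_orderEmbOfFin_univ s hs, sum_map]
  exact sum_le_sum fun i _ ↦ hv (Fin.val_le_of_strictMono (s.orderEmbOfFin hs).strictMono i)

section BlockSum

variable {M : Type*} [AddCommMonoid M] {m r : ℕ}

def blockSum (v : Fin (m * r) → M) (k : Fin m) : M :=
  ∑ j : Fin r, v (blockIdx k j)

lemma sum_blockSum_castLE (v : Fin (m * r) → M) {k : ℕ} (hk : k ≤ m) :
    ∑ a : Fin k, blockSum v (Fin.castLE hk a) =
      ∑ i : Fin (k * r), v (Fin.castLE (Nat.mul_le_mul_right r hk) i) := by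
  simp only [blockSum]
  rw [← Fintype.sum_prod_type']
  refine Fintype.sum_equiv finProdFinEquiv _ _ fun ⟨a, j⟩ ↦ congrArg v (Fin.ext ?_)
  simp only [blockIdx, Fin.val_castLE, finProdFinEquiv_apply_val]
  ring

lemma sum_blockSum (v : Fin (m * r) → M) : ∑ k, blockSum v k = ∑ i, v i := by
  simpa using sum_blockSum_castLE v le_rfl

lemma Antitone.blockSum [PartialOrder M] [IsOrderedAddMonoid M] {v : Fin (m * r) → M}
    (hv : Antitone v) : Antitone (blockSum v) := fun _ _ hab ↦
  sum_le_sum fun j _ ↦ hv (Nat.add_le_add_right (Nat.mul_le_mul_right r hab) j)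

end BlockSum

lemma kMaxSum_blockSum {m r : ℕ} {v : Fin (m * r) → ℝ} (hv : Antitone v) {k : ℕ} (hk : k ≤ m) :
    kMaxSum (blockSum v) k = kMaxSum v (k * r) := by
  rw [kMaxSum_eq_sum_castLE hv.blockSum hk, kMaxSum_eq_sum_castLE hv (Nat.mul_le_mul_right r hk),
    sum_blockSum_castLE]

theorem Majorizes.blockSum {m r : ℕ} (hr : 0 < r) {x y : Fin (m * r) → ℝ}
    (hx : Antitone x) (hy : Antitone y) (hxy : Majorizes x y) :
    Majorizes (blockSum x) (blockSum y) := by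
  refine ⟨fun k hk hkm ↦ ?_, by rw [sum_blockSum, sum_blockSum, hxy.2]⟩
  rw [kMaxSum_blockSum hx hkm, kMaxSum_blockSum hy hkm]
  exact hxy.1 (k * r) (Nat.one_le_iff_ne_zero.mpr (by positivity)) (Nat.mul_le_mul_right r hkm)

theorem stmt5_general (m r : ℕ) (hr : 0 < r)
    (x y : Fin (m * r) → ℝ) (hx : Antitone x) (hy : Antitone y)
    (hxy : Majorizes x y)
    (X Y : Fin m → ℝ)
    (hX : ∀ k, X k = ∑ j : Fin r, x (blockIdx k j))
    (hY : ∀ k, Y k = ∑ j : Fin r, y (blockIdx k j)) :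
    Majorizes X Y := by
  obtain rfl : X = blockSum x := funext hX
  obtain rfl : Y = blockSum y := funext hY
  exact hxy.blockSum hr hx hy

theorem stmt5 (m r : ℕ) (hm : 0 < m) (hr : 0 < r)
    (x y : Fin (m * r) → ℝ) (hx : Antitone x) (hy : Antitone y)
    (hxy : Majorizes x y)
    (X Y : Fin m → ℝ)
    (hX : ∀ k, X k = ∑ j : Fin r, x (blockIdx k j))
    (hY : ∀ k, Y k = ∑ j : Fin r, y (blockIdx k j)) :
    Majorizes X Y :=
  stmt5_general m r hr x y hx hy hxy X Y hX hY
end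

section
/- Let m, r be positive integers, let p ∈ ℝ^{mr} have nonnegative entries, and let p↓ denote p rearranged in decreasing order. Define q_k = ∑_{j=1}^{r} p_{(k-1)r+j} and q↓_k = ∑_{j=1}^{r} (p↓)_{(k-1)r+j} for 1 ≤ k ≤ m. Then q is majorized by q↓. -/
open Finset

/-! Any `k` blocks of `p` consist of `k r` entries of `p`, i.e. of `p↓`, whose sum is at most that
of the first `k r` entries of `p↓`, which make up the first `k` blocks of `p↓`. -/

section kMaxSum

variable {n k : ℕ} (v : Fin n → ℝ)

lemma bddAbove_kMaxSum_set :
    BddAbove {t : ℝ | ∃ s : Finset (Fin n), s.card = k ∧ t = ∑ i ∈ s, v i} := by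
  refine (((univ.powersetCard k).image fun s => ∑ i ∈ s, v i).finite_toSet.subset ?_).bddAbove
  rintro t ⟨s, hs, rfl⟩
  exact mem_image.2 ⟨s, mem_powersetCard.2 ⟨subset_univ s, hs⟩, rfl⟩

lemma sum_le_kMaxSum {s : Finset (Fin n)} (hs : s.card = k) : ∑ i ∈ s, v i ≤ kMaxSum v k :=
  le_csSup (bddAbove_kMaxSum_set v) ⟨s, hs, rfl⟩

lemma kMaxSum_le {B : ℝ} (hk : k ≤ n)
    (h : ∀ s : Finset (Fin n), s.card = k → ∑ i ∈ s, v i ≤ B) :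
    kMaxSum v k ≤ B := by
  obtain ⟨s, -, hs⟩ := exists_subset_card_eq (s := (univ : Finset (Fin n))) (by simpa using hk)
  exact csSup_le ⟨_, s, hs, rfl⟩ (by rintro t ⟨u, hu, rfl⟩; exact h u hu)

lemma sum_castLE_le_kMaxSum (hk : k ≤ n) :
    ∑ i : Fin k, v (Fin.castLE hk i) ≤ kMaxSum v k := by
  simpa [sum_map] using sum_le_kMaxSum v (s := univ.map (Fin.castLEEmb hk)) (by simp)

end kMaxSum

lemma sum_le_sum_castLE_of_antitone {M : Type*} [AddCommMonoid M] [PartialOrder M]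
    [IsOrderedAddMonoid M] {n k : ℕ} {v : Fin n → M} (hv : Antitone v) (hk : k ≤ n)
    {s : Finset (Fin n)} (hs : s.card = k) :
    ∑ i ∈ s, v i ≤ ∑ i : Fin k, v (Fin.castLE hk i) := by
  rw [← map_orderEmbOfFin_univ s hs, sum_map]
  exact sum_le_sum fun i _ =>
    hv (Fin.le_def.2 (Fin.val_le_of_strictMono (s.orderEmbOfFin hs).strictMono i))

section blocks

variable {m r : ℕ} {M : Type*} [AddCommMonoid M]

lemma blockIdx_eq_finProdFinEquiv (k : Fin m) (j : Fin r) :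
    blockIdx k j = finProdFinEquiv (k, j) :=
  Fin.ext (by simp [blockIdx, finProdFinEquiv, Nat.add_comm, Nat.mul_comm])

lemma blockIdx_castLE {k : ℕ} (hk : k ≤ m) (a : Fin k) (j : Fin r) :
    blockIdx (Fin.castLE hk a) j = Fin.castLE (Nat.mul_le_mul_right r hk) (blockIdx a j) :=
  rfl

lemma sum_sum_blockIdx (S : Finset (Fin m)) (f : Fin (m * r) → M) :
    ∑ a ∈ S, ∑ j : Fin r, f (blockIdx a j) =
      ∑ i ∈ (S ×ˢ univ).map finProdFinEquiv.toEmbedding, f i := by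
  simp [sum_map, sum_product, blockIdx_eq_finProdFinEquiv]

lemma sum_sum_blockIdx_univ (f : Fin (m * r) → M) :
    ∑ a : Fin m, ∑ j : Fin r, f (blockIdx a j) = ∑ i, f i := by
  simp [blockIdx_eq_finProdFinEquiv, ← Fintype.sum_prod_type', Equiv.sum_comp]

end blocks

theorem stmt6_general (m r : ℕ)
    (p : Fin (m * r) → ℝ)
    -- `pd` is the decreasing rearrangement `p↓` of `p`
    (pd : Fin (m * r) → ℝ) (hpd : Antitone pd)
    (hperm : ∃ σ : Equiv.Perm (Fin (m * r)), ∀ i, pd i = p (σ i))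
    (q qd : Fin m → ℝ)
    (hq : ∀ k, q k = ∑ j : Fin r, p (blockIdx k j))
    (hqd : ∀ k, qd k = ∑ j : Fin r, pd (blockIdx k j)) :
    Majorizes q qd := by
  obtain ⟨σ, hσ⟩ := hperm
  have hp_pd : ∀ i, p i = pd (σ.symm i) := fun i => by rw [hσ, σ.apply_symm_apply]
  refine ⟨fun k _ hkm => kMaxSum_le q hkm fun s hs => ?_, ?_⟩
  · set B := (s ×ˢ univ).map (finProdFinEquiv (m := m) (n := r)).toEmbedding
    calc ∑ a ∈ s, q a = ∑ a ∈ s, ∑ j : Fin r, pd (σ.symm (blockIdx a j)) := by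
          simp only [hq, hp_pd]
      _ = ∑ i ∈ B.map σ.symm.toEmbedding, pd i :=
          (sum_sum_blockIdx s fun i => pd (σ.symm i)).trans (sum_map B σ.symm.toEmbedding pd).symm
      _ ≤ ∑ i : Fin (k * r), pd (Fin.castLE (Nat.mul_le_mul_right r hkm) i) :=
          sum_le_sum_castLE_of_antitone hpd _ (by simp [B, hs])
      _ = ∑ a : Fin k, qd (Fin.castLE hkm a) := by
          simp only [hqd, blockIdx_castLE]
          exact (sum_sum_blockIdx_univ fun i => pd (Fin.castLE _ i)).symm
      _ ≤ kMaxSum qd k := sum_castLE_le_kMaxSum qd hkm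
  · calc ∑ a, q a = ∑ i, p i := by simp only [hq]; exact sum_sum_blockIdx_univ p
      _ = ∑ i, pd i := by simp only [hσ, Equiv.sum_comp]
      _ = ∑ a, qd a := by simp only [hqd]; exact (sum_sum_blockIdx_univ pd).symm

theorem stmt6 (m r : ℕ) (hm : 0 < m) (hr : 0 < r)
    (p : Fin (m * r) → ℝ) (hp : ∀ i, 0 ≤ p i)
    -- `pd` is the decreasing rearrangement `p↓` of `p`
    (pd : Fin (m * r) → ℝ) (hpd : Antitone pd)
    (hperm : ∃ σ : Equiv.Perm (Fin (m * r)), ∀ i, pd i = p (σ i))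
    (q qd : Fin m → ℝ)
    (hq : ∀ k, q k = ∑ j : Fin r, p (blockIdx k j))
    (hqd : ∀ k, qd k = ∑ j : Fin r, pd (blockIdx k j)) :
    Majorizes q qd :=
  stmt6_general m r p pd hpd hperm q qd hq hqd
end
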